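/- arXiv:2008.08153 — 3 statements merged into one kernel-verified Lean document; each statement's English description precedes it below -/
import Mathlib

section
/- If v is a well-behaved absolute value on a field K and L/K is a finite extension, then every absolute value w on L extending v is also well-behaved. -/
noncomputable section

open scoped Classical

universe u

section AbsDefs

variable {K : Type u} [Field K] {L : Type u} [Field L]

/-- The restriction (pullback) of an absolute value along `algebraMap K L`. -/
def comapAbs [Algebra K L] (w : AbsoluteValue L ℝ) : AbsoluteValue K ℝ where
  toFun x := w (algebraMap K L x)
  map_mul' x y := by simp
  nonneg' x := w.nonneg _
  eq_zero' x := by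
    rw [w.eq_zero, map_eq_zero_iff _ (algebraMap K L).injective]
  add_le' x y := by simpa using w.add_le (algebraMap K L x) (algebraMap K L y)

/-- `algebraMap K L` viewed as a ring homomorphism `WithAbs v →+* WithAbs w`. -/
def algWithAbs [Algebra K L] (v : AbsoluteValue K ℝ) (w : AbsoluteValue L ℝ) :
    WithAbs v →+* WithAbs w :=
  ((WithAbs.equiv w).symm.toRingHom.comp (algebraMap K L)).comp
    (WithAbs.equiv v).toRingHom

/-- The induced ring homomorphism `K_v →+* L_w` between completions, when `w` extends `v`. -/
def extCompletionHom [Algebra K L] (v : AbsoluteValue K ℝ) (w : AbsoluteValue L ℝ)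
    (h : ∀ x, w (algebraMap K L x) = v x) : v.Completion →+* w.Completion :=
  UniformSpace.Completion.mapRingHom (algWithAbs v w)
    (AddMonoidHomClass.isometry_of_norm (algWithAbs v w) (fun x => h x.ofAbs)).continuous

/-- The local degree `[L_w : K_v]` of an extension `w` of `v`. -/
def localDegree [Algebra K L] (v : AbsoluteValue K ℝ) (w : AbsoluteValue L ℝ)
    (h : ∀ x, w (algebraMap K L x) = v x) : ℕ :=
  letI : Algebra v.Completion w.Completion := (extCompletionHom v w h).toAlgebra
  Module.finrank v.Completion w.Completion

/-- An absolute value is well-behaved if for every finite extension `L/K` the degree formula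
`[L:K] = Σ_{w | v} [L_w : K_v]` holds. -/
def IsWellBehaved (K : Type u) [Field K] (v : AbsoluteValue K ℝ) : Prop :=
  ∀ (L : Type u) [Field L] [Algebra K L], FiniteDimensional K L →
    (Module.finrank K L : ℕ) =
      ∑ᶠ w : {w : AbsoluteValue L ℝ // ∀ x, w (algebraMap K L x) = v x},
        localDegree v w.1 w.2

/-- Non-triviality of an absolute value. -/
def IsNontrivialAbs (v : AbsoluteValue K ℝ) : Prop := ∃ x : K, x ≠ 0 ∧ v x ≠ 1

/-- Non-archimedean absolute value. -/
def IsNonarchAbs (v : AbsoluteValue K ℝ) : Prop := ∀ x y, v (x + y) ≤ max (v x) (v y)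

/-- Two absolute values are equivalent if they define the same topology; equivalently, they
have the same open unit balls. -/
def AbsEquivalent (v w : AbsoluteValue K ℝ) : Prop := ∀ x, v x < 1 ↔ w x < 1

/-- A proper absolute value: non-trivial, well-behaved, and in characteristic zero its
restriction to `ℚ` is equivalent to the trivial, a `p`-adic, or the usual absolute value. -/
def IsProperAbs (v : AbsoluteValue K ℝ) : Prop :=
  IsNontrivialAbs v ∧ IsWellBehaved K v ∧
  ∀ (_ : CharZero K),
    (∀ q : ℚ, q ≠ 0 → ¬ v (q : K) < 1) ∨
    (∃ p : ℕ, p.Prime ∧ ∀ q : ℚ, (v (q : K) < 1 ↔ (padicNorm p q : ℝ) < 1)) ∨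
    (∀ q : ℚ, v (q : K) < 1 ↔ |(q : ℝ)| < 1)

/-- A proper set of absolute values. -/
def IsProperAbsSet (M : Set (AbsoluteValue K ℝ)) : Prop :=
  M.Nonempty ∧ (∀ v ∈ M, IsProperAbs v) ∧
  (M.Pairwise fun v w => ¬ AbsEquivalent v w) ∧
  ∀ x : K, x ≠ 0 → {v ∈ M | v x ≠ 1}.Finite

end AbsDefs

/-!
Let `M / L` be finite. Grouping the extensions of `v` to `M` by their restriction `r` to `L` and
using multiplicativity of local degrees in towers, well-behavedness of `v` gives, with
`d r = [L_r : K_v]` and `S r = Σ_{t ∣ r} [M_t : L_r]`,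
`Σ_r d r * S r = [M : K] = [M : L] * Σ_r d r`.
For nontrivial `v`, weak approximation makes the diagonal map `M → Π_{t ∣ r} M_t` dense, so the
`L_r`-span of the image of an `L`-basis of `M`, being finite-dimensional and hence closed, is
everything: `S r ≤ [M : L]`. Since every `d r` is positive, this forces `S w = [M : L]`.
For trivial `v`, Cauchy's bound on roots makes every extension trivial, so `w` is the only term
and `d w = [L : K] > 0` can be cancelled directly.
-/

open UniformSpace Module

section DenseSpan

variable {R 𝕜 V E : Type*} [Field R] [NontriviallyNormedField 𝕜] [CompleteSpace 𝕜] [Algebra R 𝕜]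
  [AddCommGroup V] [Module R V] [FiniteDimensional R V]
  [AddCommGroup E] [Module 𝕜 E] [Module R E] [IsScalarTower R 𝕜 E]
  [TopologicalSpace E] [IsTopologicalAddGroup E] [ContinuousSMul 𝕜 E] [T2Space E]

theorem LinearMap.span_image_finBasis_eq_top (f : V →ₗ[R] E) (hf : DenseRange f) :
    Submodule.span 𝕜 (Set.range (f ∘ finBasis R V)) = ⊤ := by
  set S := Submodule.span 𝕜 (Set.range (f ∘ finBasis R V))
  have : FiniteDimensional 𝕜 S := FiniteDimensional.span_of_finite 𝕜 (Set.finite_range _)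
  have hrange : Set.range f ⊆ S := by
    rw [← LinearMap.coe_range, LinearMap.range_eq_map, ← (finBasis R V).span_eq,
      Submodule.map_span, ← Set.range_comp]
    exact Submodule.span_le_restrictScalars R 𝕜 _
  refine Submodule.eq_top_iff'.mpr fun x => ?_
  rw [← SetLike.mem_coe, ← S.closed_of_finiteDimensional.closure_eq]
  exact closure_mono hrange (hf x)

theorem LinearMap.finiteDimensional_of_denseRange (f : V →ₗ[R] E) (hf : DenseRange f) :
    FiniteDimensional 𝕜 E := by
  refine ⟨?_⟩
  rw [← f.span_image_finBasis_eq_top (𝕜 := 𝕜) hf]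
  exact Submodule.fg_span (Set.finite_range _)

theorem LinearMap.finrank_le_of_denseRange (f : V →ₗ[R] E) (hf : DenseRange f) :
    finrank 𝕜 E ≤ finrank R V := by
  rw [← finrank_top, ← f.span_image_finBasis_eq_top (𝕜 := 𝕜) hf]
  exact (finrank_range_le_card (R := 𝕜) _).trans_eq (Fintype.card_fin _)

end DenseSpan

namespace AbsoluteValue

variable {F : Type*} [Field F]

theorem IsEquiv.eq_of_apply_eq {u u' : AbsoluteValue F ℝ} (h : u.IsEquiv u') {x : F}
    (hx₀ : x ≠ 0) (hx₁ : u x ≠ 1) (hx : u x = u' x) : u = u' := by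
  obtain ⟨c, -, hc⟩ := isEquiv_iff_exists_rpow_eq.mp h
  have hc₁ : c = 1 := by
    rw [← Real.rpow_right_inj (u.pos hx₀) hx₁, Real.rpow_one]
    exact (congrFun hc x).trans hx.symm
  ext y
  rw [← hc, hc₁]
  exact (Real.rpow_one _).symm

theorem apply_lt_two_of_not_isNontrivial {K : Type*} [Field K] [Algebra K F]
    [Algebra.IsIntegral K F] {v : AbsoluteValue K ℝ} {w : AbsoluteValue F ℝ} (hv : ¬ v.IsNontrivial)
    (hw : ∀ x, w (algebraMap K F x) = v x) (z : F) : w z < 2 := by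
  set p := (minpoly K z).map (algebraMap K (WithAbs w))
  have hmonic : p.Monic := (minpoly.monic (Algebra.IsIntegral.isIntegral z)).map _
  have hroot : p.IsRoot (WithAbs.toAbs w z) := by
    rw [Polynomial.IsRoot.def, Polynomial.eval_map_algebraMap,
      show WithAbs.toAbs w z = (WithAbs.algEquiv (R := K) w).symm z from rfl,
      Polynomial.aeval_algEquiv, AlgHom.comp_apply, minpoly.aeval, map_zero]
  have hcoeff (i : ℕ) : ‖p.coeff i‖₊ ≤ 1 := by
    rw [← NNReal.coe_le_coe, coe_nnnorm, Polynomial.coeff_map]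
    change w (algebraMap K F _) ≤ 1
    rw [hw]
    rcases eq_or_ne ((minpoly K z).coeff i) 0 with h0 | h0
    · simp [h0]
    · exact (not_isNontrivial_apply hv h0).le
  have hbound : p.cauchyBound ≤ 2 := by
    rw [Polynomial.cauchyBound, hmonic.leadingCoeff, nnnorm_one, div_one, ← one_add_one_eq_two]
    gcongr
    exact Finset.sup_le fun i _ => hcoeff i
  exact_mod_cast (hroot.norm_lt_cauchyBound hmonic.ne_zero).trans_le hbound

theorem not_isNontrivial_of_extension {K : Type*} [Field K] [Algebra K F]
    [Algebra.IsIntegral K F] {v : AbsoluteValue K ℝ} {w : AbsoluteValue F ℝ}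
    (hv : ¬ v.IsNontrivial) (hw : ∀ x, w (algebraMap K F x) = v x) : ¬ w.IsNontrivial := by
  intro hnt
  obtain ⟨z, hz⟩ := hnt.exists_abv_gt_one
  obtain ⟨k, hk⟩ := pow_unbounded_of_one_lt 2 hz
  exact (apply_lt_two_of_not_isNontrivial hv hw (z ^ k)).not_gt (by rwa [map_pow])

theorem isNontrivial_of_extension {K : Type*} [Field K] [Algebra K F]
    {v : AbsoluteValue K ℝ} {w : AbsoluteValue F ℝ} (hv : v.IsNontrivial)
    (hw : ∀ x, w (algebraMap K F x) = v x) : w.IsNontrivial := by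
  obtain ⟨x, hx₀, hx₁⟩ := hv
  exact ⟨algebraMap K F x, (map_ne_zero (algebraMap K F)).mpr hx₀, by rwa [hw]⟩

end AbsoluteValue

open AbsoluteValue

abbrev AbsoluteValue.Completion.nontriviallyNormedField {K : Type*} [Field K]
    {v : AbsoluteValue K ℝ} (hv : v.IsNontrivial) : NontriviallyNormedField v.Completion :=
  .ofNormNeOne <| by
    obtain ⟨x, hx₀, hx₁⟩ := hv
    exact ⟨x, by simpa using hx₀, by rwa [Completion.norm_coe]⟩

section Extension

variable {K L : Type u} [Field K] [Field L] [Algebra K L]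

abbrev AbsoluteValue.Extension (v : AbsoluteValue K ℝ) (L : Type u) [Field L] [Algebra K L] :
    Type u :=
  {w : AbsoluteValue L ℝ // ∀ x, w (algebraMap K L x) = v x}

def sumLocalDegree (v : AbsoluteValue K ℝ) (L : Type u) [Field L] [Algebra K L] : ℕ :=
  ∑ᶠ w : Extension v L, localDegree v w.1 w.2

theorem subsingleton_extension [Algebra.IsIntegral K L] {v : AbsoluteValue K ℝ}
    (hv : ¬ v.IsNontrivial) : Subsingleton (Extension v L) := by
  refine ⟨fun w w' => Subtype.ext <| AbsoluteValue.ext fun x => ?_⟩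
  rcases eq_or_ne x 0 with rfl | hx
  · simp
  · rw [not_isNontrivial_apply (not_isNontrivial_of_extension hv w.2) hx,
      not_isNontrivial_apply (not_isNontrivial_of_extension hv w'.2) hx]

theorem eq_of_isEquiv_of_extension {v : AbsoluteValue K ℝ} (hv : v.IsNontrivial)
    {w w' : Extension v L} (h : w.1.IsEquiv w'.1) : w = w' := by
  obtain ⟨x, hx₀, hx₁⟩ := hv
  refine Subtype.ext <| h.eq_of_apply_eq ((map_ne_zero (algebraMap K L)).mpr hx₀) ?_ ?_
  · rwa [w.2]
  · rw [w.2, w'.2]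

end Extension

section Completion

variable {K L M : Type u} [Field K] [Field L] [Field M] [Algebra K L]
  (v : AbsoluteValue K ℝ) (w : AbsoluteValue L ℝ) (h : ∀ x, w (algebraMap K L x) = v x)

theorem extCompletionHom_coe (x : K) :
    extCompletionHom v w h x = (algebraMap K L x : w.Completion) :=
  Completion.mapRingHom_coe _ _

theorem continuous_extCompletionHom : Continuous (extCompletionHom v w h) :=
  Completion.continuous_extension

theorem extCompletionHom_comp [Algebra L M] [Algebra K M] [IsScalarTower K L M]
    (u : AbsoluteValue M ℝ) (h' : ∀ x, u (algebraMap L M x) = w x)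
    (h'' : ∀ x, u (algebraMap K M x) = v x) :
    (extCompletionHom w u h').comp (extCompletionHom v w h) = extCompletionHom v u h'' := by
  refine RingHom.ext fun x => Completion.induction_on x ?_ fun a => ?_
  · exact isClosed_eq ((continuous_extCompletionHom w u h').comp
      (continuous_extCompletionHom v w h)) (continuous_extCompletionHom v u h'')
  · change extCompletionHom w u h' (extCompletionHom v w h (a.ofAbs : v.Completion)) =
      extCompletionHom v u h'' (a.ofAbs : v.Completion)
    rw [extCompletionHom_coe, extCompletionHom_coe, extCompletionHom_coe,
      ← IsScalarTower.algebraMap_apply]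

theorem isScalarTower_completion :
    letI := (extCompletionHom v w h).toAlgebra
    IsScalarTower K v.Completion w.Completion :=
  let := (extCompletionHom v w h).toAlgebra
  .of_algebraMap_eq fun x => (extCompletionHom_coe v w h x).symm

theorem continuousSMul_completion :
    letI := (extCompletionHom v w h).toAlgebra
    ContinuousSMul v.Completion w.Completion :=
  let := (extCompletionHom v w h).toAlgebra
  continuousSMul_of_algebraMap _ _ (continuous_extCompletionHom v w h)

theorem denseRange_algebraMap_completion :
    DenseRange (algebraMap L w.Completion) := by
  change DenseRange (((↑) : WithAbs w → w.Completion) ∘ WithAbs.toAbs w)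
  rw [DenseRange, (WithAbs.toAbs_surjective w).range_comp]
  exact Completion.denseRange_coe

theorem finiteDimensional_completion [FiniteDimensional K L] (hv : v.IsNontrivial) :
    letI := (extCompletionHom v w h).toAlgebra
    FiniteDimensional v.Completion w.Completion :=
  let := (extCompletionHom v w h).toAlgebra
  let := Completion.nontriviallyNormedField hv
  have := isScalarTower_completion v w h
  have := continuousSMul_completion v w h
  (IsScalarTower.toAlgHom K L w.Completion).toLinearMap.finiteDimensional_of_denseRange
    (denseRange_algebraMap_completion w)

theorem localDegree_pos [FiniteDimensional K L] (hv : v.IsNontrivial) : 0 < localDegree v w h :=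
  let := (extCompletionHom v w h).toAlgebra
  have := finiteDimensional_completion v w h hv
  finrank_pos

theorem localDegree_mul_localDegree [Algebra L M] [Algebra K M] [IsScalarTower K L M]
    (u : AbsoluteValue M ℝ) (h' : ∀ x, u (algebraMap L M x) = w x)
    (h'' : ∀ x, u (algebraMap K M x) = v x) :
    localDegree v w h * localDegree w u h' = localDegree v u h'' := by
  let := (extCompletionHom v w h).toAlgebra
  let := (extCompletionHom w u h').toAlgebra
  let := (extCompletionHom v u h'').toAlgebra
  have : IsScalarTower v.Completion w.Completion u.Completion :=
    .of_algebraMap_eq' (extCompletionHom_comp v w h u h' h'').symm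
  exact finrank_mul_finrank v.Completion w.Completion u.Completion

end Completion

section WeakApproximation

variable {L M : Type u} [Field L] [Field M] [Algebra L M] {w : AbsoluteValue L ℝ}

theorem denseRange_algebraMap_pi_completion (hw : w.IsNontrivial) [Finite (Extension w M)] :
    DenseRange (algebraMap M (∀ t : Extension w M, t.1.Completion)) :=
  (DenseRange.piMap fun _ => Completion.denseRange_coe).comp
    (denseRange_algebraMap_pi (fun t => isNontrivial_of_extension hw t.2)
      fun _ _ hne h => hne (eq_of_isEquiv_of_extension hw h))
    (continuous_pi fun t => (Completion.continuous_coe _).comp (continuous_apply t))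

theorem sumLocalDegree_le_finrank [FiniteDimensional L M] (hw : w.IsNontrivial)
    [Finite (Extension w M)] :
    sumLocalDegree w M ≤ finrank L M := by
  have := Fintype.ofFinite (Extension w M)
  let := Completion.nontriviallyNormedField hw
  let (t : Extension w M) := (extCompletionHom w t.1 t.2).toAlgebra
  have (t : Extension w M) := isScalarTower_completion w t.1 t.2
  have (t : Extension w M) := continuousSMul_completion w t.1 t.2
  have (t : Extension w M) := finiteDimensional_completion w t.1 t.2 hw
  calc sumLocalDegree w M = finrank w.Completion (∀ t : Extension w M, t.1.Completion) := by
        rw [sumLocalDegree, finsum_eq_sum_of_fintype, finrank_pi_fintype]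
        rfl
    _ ≤ finrank L M :=
        (IsScalarTower.toAlgHom L M (∀ t : Extension w M, t.1.Completion)).toLinearMap
          |>.finrank_le_of_denseRange (denseRange_algebraMap_pi_completion hw)

end WeakApproximation

section Tower

variable {K L M : Type u} [Field K] [Field L] [Field M] [Algebra K L] [Algebra L M] [Algebra K M]
  [IsScalarTower K L M] (v : AbsoluteValue K ℝ)

def extensionSigmaEquiv : (Σ r : Extension v L, Extension r.1 M) ≃ Extension v M where
  toFun p := ⟨p.2.1, fun x => by rw [IsScalarTower.algebraMap_apply K L M, p.2.2, p.1.2]⟩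
  invFun s := ⟨⟨comapAbs s.1, fun x => by
    change s.1 _ = _
    rw [← IsScalarTower.algebraMap_apply, s.2]⟩, ⟨s.1, fun _ => rfl⟩⟩
  left_inv p := Sigma.subtype_ext (Subtype.ext (AbsoluteValue.ext p.2.2)) rfl
  right_inv _ := rfl

theorem finite_extension_of_tower [Finite (Extension v M)] (r : Extension v L) :
    Finite (Extension r.1 M) :=
  .of_injective (fun t => extensionSigmaEquiv v ⟨r, t⟩) fun _ _ h => by
    simpa using (extensionSigmaEquiv v).injective h

theorem sumLocalDegree_tower [Finite (Extension v L)] [Finite (Extension v M)] :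
    ∑ᶠ r : Extension v L, localDegree v r.1 r.2 * sumLocalDegree r.1 M = sumLocalDegree v M := by
  have := Fintype.ofFinite (Extension v L)
  have := Fintype.ofFinite (Extension v M)
  have (r : Extension v L) : Fintype (Extension r.1 M) :=
    @Fintype.ofFinite _ (finite_extension_of_tower v r)
  simp only [sumLocalDegree, finsum_eq_sum_of_fintype, Finset.mul_sum]
  calc _ = ∑ p : (Σ r : Extension v L, Extension r.1 M),
        localDegree v (extensionSigmaEquiv v p).1 (extensionSigmaEquiv v p).2 := by
        rw [Fintype.sum_sigma]
        exact Fintype.sum_congr _ _ fun r => Fintype.sum_congr _ _ fun t =>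
          localDegree_mul_localDegree v r.1 r.2 t.1 t.2 _
    _ = _ := (extensionSigmaEquiv v).sum_comp fun s => localDegree v s.1 s.2

theorem IsWellBehaved.finsum_localDegree_mul_sumLocalDegree (hv : IsWellBehaved K v)
    [FiniteDimensional K L] [FiniteDimensional L M]
    [Finite (Extension v L)] [Finite (Extension v M)] :
    ∑ᶠ r : Extension v L, localDegree v r.1 r.2 * sumLocalDegree r.1 M =
      ∑ᶠ r : Extension v L, localDegree v r.1 r.2 * finrank L M := by
  have := Fintype.ofFinite (Extension v L)
  have hL : finrank K L = sumLocalDegree v L := hv L ‹_›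
  have hM : finrank K M = sumLocalDegree v M := hv M (Module.Finite.trans L M)
  calc _ = sumLocalDegree v M := sumLocalDegree_tower v
    _ = finrank K L * finrank L M := by rw [← hM, finrank_mul_finrank]
    _ = _ := by rw [hL, sumLocalDegree, finsum_eq_sum_of_fintype, finsum_eq_sum_of_fintype,
        Finset.sum_mul]

end Tower

theorem finite_of_finsum_ne_zero {ι : Type*} {f : ι → ℕ} (hf : ∀ i, f i ≠ 0)
    (h : ∑ᶠ i, f i ≠ 0) : Finite ι := by
  by_contra hinf
  rw [not_finite_iff_infinite] at hinf
  refine h (finsum_of_infinite_support ?_)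
  simpa [Function.support, hf] using Set.infinite_univ

theorem IsWellBehaved.finite_extension {K : Type u} [Field K] {v : AbsoluteValue K ℝ}
    (hv : IsWellBehaved K v) (hvt : v.IsNontrivial) (L : Type u) [Field L] [Algebra K L]
    [FiniteDimensional K L] : Finite (Extension v L) :=
  finite_of_finsum_ne_zero (fun w => (localDegree_pos v w.1 w.2 hvt).ne')
    (hv L ‹_› ▸ finrank_pos.ne')

/-- if `v` is a well-behaved absolute value on `K` and `L/K` is a finite
extension, then every absolute value `w` on `L` extending `v` is also well-behaved. -/
theorem stmt_2 {K : Type u} [Field K] {L : Type u} [Field L] [Algebra K L]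
    [FiniteDimensional K L] (v : AbsoluteValue K ℝ) (hv : IsWellBehaved K v)
    (w : AbsoluteValue L ℝ) (hw : ∀ x, w (algebraMap K L x) = v x) :
    IsWellBehaved L w := by
  intro M _ _ _
  let : Algebra K M := ((algebraMap L M).comp (algebraMap K L)).toAlgebra
  have : IsScalarTower K L M := .of_algebraMap_eq' rfl
  have : FiniteDimensional K M := Module.Finite.trans L M
  suffices key : 0 < localDegree v w hw ∧
      localDegree v w hw * sumLocalDegree w M = localDegree v w hw * finrank L M from
    (Nat.eq_of_mul_eq_mul_left key.1 key.2).symm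
  by_cases hvt : v.IsNontrivial
  · have := hv.finite_extension hvt L
    have := hv.finite_extension hvt M
    have := Fintype.ofFinite (Extension v L)
    have (r : Extension v L) := finite_extension_of_tower (M := M) v r
    have hsum := hv.finsum_localDegree_mul_sumLocalDegree (L := L) (M := M)
    rw [finsum_eq_sum_of_fintype, finsum_eq_sum_of_fintype, Finset.sum_eq_sum_iff_of_le fun r _ =>
      Nat.mul_le_mul_left _ (sumLocalDegree_le_finrank (isNontrivial_of_extension hvt r.2))] at hsum
    exact ⟨localDegree_pos v w hw hvt, hsum ⟨w, hw⟩ (Finset.mem_univ _)⟩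
  · have := subsingleton_extension (L := L) hvt
    have := subsingleton_extension (L := M) hvt
    let := uniqueOfSubsingleton (⟨w, hw⟩ : Extension v L)
    have hsum := hv.finsum_localDegree_mul_sumLocalDegree (L := L) (M := M)
    have hL : finrank K L = localDegree v w hw := (hv L ‹_›).trans (finsum_unique _)
    rw [finsum_unique, finsum_unique] at hsum
    exact ⟨hL ▸ finrank_pos, hsum⟩
end
end

section
/- Let V be a Noetherian scheme, U ⊆ V an open subset, and Z = V \ U with the reduced closed subscheme structure. Let W_1, W_2 be closed subschemes of V such that W_1 ∩ U = W_2 ∩ U as closed subschemes of U. Then there exists a non-negative integer n such that I_Z^n · I_{W_2} ⊆ I_{W_1} (i.e., W_1 ⊆ W_2 + nZ as closed subschemes). -/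
open AlgebraicGeometry CategoryTheory Opposite

/-- The ideal of sections over `V'` vanishing at every point of `V'` outside `U`, i.e. the
ideal of the reduced closed subscheme structure on `Z = V \ U`, evaluated on `V'`. -/
noncomputable def vanishingIdealOfComplement (V : AlgebraicGeometry.Scheme) (U V' : V.Opens) :
    Ideal (V.presheaf.obj (op V')) :=
  ⨅ (x : {x : V // x ∈ V' ∧ x ∉ U}),
    Ideal.comap (V.presheaf.germ V' x.1 x.2.1).hom (IsLocalRing.maximalIdeal _)

/-!
A section `s` lies in the vanishing ideal of `Z` exactly when its basic open `D(s)` lies in `U`.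
Hence on an affine open `A` the two kernels agree after inverting any `g ∈ I_Z(A)`, so some power
of `g` multiplies `I_{W₂}(A)` into `I_{W₁}(A)`; as `Γ(V, A)` is Noetherian, one power `I_Z(A)^n`
does. Both ideals are quasi-coherent, so the bound passes to the basic opens of `A`. A finite
affine cover gives a uniform `n`, and over an arbitrary open the inclusion is checked locally on
such basic opens, by the sheaf property of `𝒪_{W₁}`.
-/

theorem Ideal.exists_pow_mul_le_of_forall_exists_pow_mul_mem {R : Type*} [CommRing R]
    [IsNoetherianRing R] (I J K : Ideal R) (h : ∀ g ∈ I, ∀ s ∈ J, ∃ m : ℕ, g ^ m * s ∈ K) :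
    ∃ n : ℕ, I ^ n * J ≤ K := by
  have hrad : I ≤ (K.colon J).radical := by
    intro g hg
    obtain ⟨S, rfl⟩ := isNoetherian_def.mp ‹_› J
    choose m hm using fun s : S => h g hg s (Ideal.subset_span s.2)
    refine Ideal.mem_radical_iff.mpr ⟨S.attach.sup m, ?_⟩
    rw [Ideal.colon_span, Submodule.mem_colon]
    intro s hs
    rw [smul_eq_mul, ← pow_sub_mul_pow g (Finset.le_sup (Finset.mem_attach S ⟨s, hs⟩)),
      mul_assoc]
    exact K.mul_mem_left _ (hm ⟨s, hs⟩)
  obtain ⟨n, hn⟩ := Ideal.exists_pow_le_of_le_radical_of_fg hrad (isNoetherian_def.mp ‹_› I)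
  exact ⟨n, Ideal.mul_le.mpr fun r hr s hs => Submodule.mem_colon.mp (hn hr) s hs⟩

namespace AlgebraicGeometry

section

variable {V : Scheme} {U : V.Opens}

theorem mem_vanishingIdealOfComplement_iff {V' : V.Opens} {s : Γ(V, V')} :
    s ∈ vanishingIdealOfComplement V U V' ↔ V.basicOpen s ≤ U := by
  simp only [vanishingIdealOfComplement, Submodule.mem_iInf, Ideal.mem_comap,
    IsLocalRing.mem_maximalIdeal, mem_nonunits_iff, Subtype.forall]
  refine ⟨fun h x hx => ?_, fun h x ⟨hxV', hxU⟩ hunit => hxU (h ?_)⟩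
  · by_contra hxU
    exact h x ⟨V.basicOpen_le s hx, hxU⟩ ((V.mem_basicOpen s x _).mp hx)
  · exact (V.mem_basicOpen s x hxV').mpr hunit

theorem map_vanishingIdealOfComplement_le {V' V'' : V.Opens} (h : V'' ≤ V') :
    (vanishingIdealOfComplement V U V').map (V.presheaf.map (homOfLE h).op).hom ≤
      vanishingIdealOfComplement V U V'' := by
  refine Ideal.map_le_iff_le_comap.mpr fun s hs => ?_
  rw [Ideal.mem_comap, mem_vanishingIdealOfComplement_iff, Scheme.basicOpen_res]
  exact inf_le_right.trans (mem_vanishingIdealOfComplement_iff.mp hs)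

theorem vanishingIdealOfComplement_basicOpen_le_map {V₀ : V.Opens} (hV₀ : IsAffineOpen V₀)
    (g : Γ(V, V₀)) :
    vanishingIdealOfComplement V U (V.basicOpen g) ≤
      (vanishingIdealOfComplement V U V₀).map
        (V.presheaf.map (homOfLE (V.basicOpen_le g)).op).hom := by
  intro s hs
  have := hV₀.isLocalization_basicOpen g
  -- `s = t / g ^ k`, and `D(t * g) = D(g) ∩ D(t) ⊆ D(s) ⊆ U`.
  obtain ⟨⟨t, _, k, rfl⟩, hst⟩ := IsLocalization.surj (Submonoid.powers g) s
  rw [RingHom.algebraMap_toAlgebra] at hst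
  have hunit : IsUnit (V.presheaf.map (homOfLE (V.basicOpen_le g)).op (g ^ (k + 1))) := by
    rw [map_pow]
    exact (V.toRingedSpace.isUnit_res_basicOpen g).pow _
  have htg : t * g ∈ vanishingIdealOfComplement V U V₀ := by
    rw [mem_vanishingIdealOfComplement_iff, Scheme.basicOpen_mul, inf_comm,
      ← Scheme.basicOpen_res V t (homOfLE (V.basicOpen_le g)).op, ← hst, Scheme.basicOpen_mul]
    exact inf_le_left.trans (mem_vanishingIdealOfComplement_iff.mp hs)
  rw [← Ideal.mul_unit_mem_iff_mem _ hunit, pow_succ, map_mul, ← mul_assoc, hst, ← map_mul]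
  exact Ideal.mem_map_of_mem _ htg

end

namespace Scheme.Hom

variable {V W : Scheme} (ι : W ⟶ V)

theorem map_ker_app_le {V' V'' : V.Opens} (h : V'' ≤ V') :
    (RingHom.ker (ι.app V').hom).map (V.presheaf.map (homOfLE h).op).hom ≤
      RingHom.ker (ι.app V'').hom := by
  refine Ideal.map_le_iff_le_comap.mpr ?_
  simp_rw [RingHom.comap_ker, ← CommRingCat.hom_comp, ι.naturality, CommRingCat.hom_comp,
    ← RingHom.comap_ker]
  exact Ideal.ker_le_comap _

theorem ker_app_basicOpen [QuasiCompact ι] {V₀ : V.Opens} (hV₀ : IsAffineOpen V₀)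
    (g : Γ(V, V₀)) :
    RingHom.ker (ι.app (V.basicOpen g)).hom =
      (RingHom.ker (ι.app V₀).hom).map (V.presheaf.map (homOfLE (V.basicOpen_le g)).op).hom := by
  have := ι.ker.map_ideal (U := ⟨V.basicOpen g, hV₀.basicOpen g⟩) (V := ⟨V₀, hV₀⟩)
    (V.basicOpen_le g)
  simp only [Scheme.Hom.ker_apply] at this
  exact this.symm

theorem mem_ker_app_of_forall_exists {V' : V.Opens} (f : Γ(V, V'))
    (h : ∀ x ∈ V', ∃ (V'' : V.Opens) (_ : x ∈ V'') (hle : V'' ≤ V'),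
      V.presheaf.map (homOfLE hle).op f ∈ RingHom.ker (ι.app V'').hom) :
    f ∈ RingHom.ker (ι.app V').hom := by
  rw [RingHom.mem_ker]
  refine TopCat.Presheaf.section_ext W.sheaf (ι ⁻¹ᵁ V') (ι.app V' f) 0 fun w hw => ?_
  obtain ⟨V'', hw'', hle, hker⟩ := h (ι.base w) hw
  have hnat := congr($(ι.naturality (homOfLE hle).op) f)
  simp only [CommRingCat.comp_apply, Quiver.Hom.unop_op] at hnat
  rw [RingHom.mem_ker, hnat] at hker
  change W.presheaf.germ _ w hw (ι.app V' f) = W.presheaf.germ _ w hw 0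
  rw [← TopCat.Presheaf.germ_res_apply W.presheaf
    ((TopologicalSpace.Opens.map ι.base).map (homOfLE hle)) w (show w ∈ ι ⁻¹ᵁ V'' from hw''),
    hker, map_zero, map_zero]

end Scheme.Hom

section

variable {V W₁ W₂ : Scheme} (U : V.Opens) (ι₁ : W₁ ⟶ V) (ι₂ : W₂ ⟶ V)

theorem exists_pow_vanishingIdealOfComplement_mul_ker_le [IsLocallyNoetherian V]
    [QuasiCompact ι₁]
    (hU : ∀ V' ≤ U, RingHom.ker (ι₂.app V').hom ≤ RingHom.ker (ι₁.app V').hom)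
    (A : V.affineOpens) :
    ∃ n : ℕ, vanishingIdealOfComplement V U A ^ n * RingHom.ker (ι₂.app A).hom ≤
      RingHom.ker (ι₁.app A).hom := by
  have := IsLocallyNoetherian.component_noetherian A
  refine Ideal.exists_pow_mul_le_of_forall_exists_pow_mul_mem _ _ _ fun g hg s hs => ?_
  have := A.2.isLocalization_basicOpen g
  have hs' : V.presheaf.map (homOfLE (V.basicOpen_le g)).op s ∈
      (RingHom.ker (ι₁.app A).hom).map (V.presheaf.map (homOfLE (V.basicOpen_le g)).op).hom := by
    rw [← ι₁.ker_app_basicOpen A.2 g]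
    exact hU _ (mem_vanishingIdealOfComplement_iff.mp hg)
      (ι₂.map_ker_app_le _ (Ideal.mem_map_of_mem _ hs))
  obtain ⟨_, ⟨m, rfl⟩, hm⟩ :=
    (IsLocalization.algebraMap_mem_map_algebraMap_iff (Submonoid.powers g) _ _ _).mp hs'
  exact ⟨m, hm⟩

theorem pow_vanishingIdealOfComplement_mul_ker_basicOpen_le [QuasiCompact ι₁] [QuasiCompact ι₂]
    {V₀ : V.Opens} (hV₀ : IsAffineOpen V₀) (g : Γ(V, V₀)) {n : ℕ}
    (h : vanishingIdealOfComplement V U V₀ ^ n * RingHom.ker (ι₂.app V₀).hom ≤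
      RingHom.ker (ι₁.app V₀).hom) :
    vanishingIdealOfComplement V U (V.basicOpen g) ^ n *
        RingHom.ker (ι₂.app (V.basicOpen g)).hom ≤
      RingHom.ker (ι₁.app (V.basicOpen g)).hom := by
  rw [ι₁.ker_app_basicOpen hV₀, ι₂.ker_app_basicOpen hV₀]
  calc _ ≤ (vanishingIdealOfComplement V U V₀).map
          (V.presheaf.map (homOfLE (V.basicOpen_le g)).op).hom ^ n *
        (RingHom.ker (ι₂.app V₀).hom).map
          (V.presheaf.map (homOfLE (V.basicOpen_le g)).op).hom :=
        Ideal.mul_mono_left (Ideal.pow_right_mono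
          (vanishingIdealOfComplement_basicOpen_le_map hV₀ g) n)
    _ ≤ _ := by
      rw [← Ideal.map_pow, ← Ideal.map_mul]
      exact Ideal.map_mono h

theorem pow_vanishingIdealOfComplement_mul_ker_le_of_forall_exists {V' : V.Opens} {n : ℕ}
    (h : ∀ x ∈ V', ∃ (V'' : V.Opens) (_ : x ∈ V'') (_ : V'' ≤ V'),
      vanishingIdealOfComplement V U V'' ^ n * RingHom.ker (ι₂.app V'').hom ≤
        RingHom.ker (ι₁.app V'').hom) :
    vanishingIdealOfComplement V U V' ^ n * RingHom.ker (ι₂.app V').hom ≤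
      RingHom.ker (ι₁.app V').hom := by
  intro f hf
  refine ι₁.mem_ker_app_of_forall_exists f fun x hx => ?_
  obtain ⟨V'', hxV'', hle, hV''⟩ := h x hx
  refine ⟨V'', hxV'', hle, hV'' ?_⟩
  have hf' := Ideal.mem_map_of_mem (V.presheaf.map (homOfLE hle).op).hom hf
  rw [Ideal.map_mul, Ideal.map_pow] at hf'
  exact Ideal.mul_mono (Ideal.pow_right_mono (map_vanishingIdealOfComplement_le hle) n)
    (ι₂.map_ker_app_le hle) hf'

end

end AlgebraicGeometry

/-- let `V` be a Noetherian scheme, `U ⊆ V` open and `Z = V \ U` with its reduced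
structure. If two closed subschemes `W₁, W₂` of `V` agree over `U` (their ideal sheaves, the
kernels of the corresponding maps of sections, agree on all opens contained in `U`), then there
is `n ≥ 0` with `I_Z^n · I_{W₂} ⊆ I_{W₁}`, i.e. `W₁ ⊆ W₂ + nZ`. -/
theorem stmt_12 (V : AlgebraicGeometry.Scheme) [AlgebraicGeometry.IsNoetherian V]
    (U : V.Opens) (W₁ W₂ : AlgebraicGeometry.Scheme)
    (ι₁ : W₁ ⟶ V) (ι₂ : W₂ ⟶ V) [IsClosedImmersion ι₁] [IsClosedImmersion ι₂]
    (hagree : ∀ V' : V.Opens, V' ≤ U →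
      RingHom.ker (ι₁.app V').hom = RingHom.ker (ι₂.app V').hom) :
    ∃ n : ℕ, ∀ V' : V.Opens,
      (vanishingIdealOfComplement V U V') ^ n * RingHom.ker (ι₂.app V').hom ≤
        RingHom.ker (ι₁.app V').hom := by
  choose n hn using exists_pow_vanishingIdealOfComplement_mul_ker_le U ι₁ ι₂
    fun V' hV' => (hagree V' hV').ge
  obtain ⟨S, hS, hcover⟩ := isCompact_and_isOpen_iff_finite_and_eq_biUnion_affineOpens.mp
    ⟨isCompact_univ (X := V), isOpen_univ⟩
  obtain ⟨N, hN⟩ := (hS.image n).bddAbove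
  refine ⟨N, fun V' => pow_vanishingIdealOfComplement_mul_ker_le_of_forall_exists U ι₁ ι₂
    fun x hx => ?_⟩
  obtain ⟨A, hAS, hxA⟩ := Set.mem_iUnion₂.mp (hcover ▸ Set.mem_univ x)
  obtain ⟨g, hgV', hxg⟩ := A.2.exists_basicOpen_le ⟨x, hx⟩ hxA
  refine ⟨V.basicOpen g, hxg, hgV', pow_vanishingIdealOfComplement_mul_ker_basicOpen_le U ι₁ ι₂
    A.2 g ?_⟩
  exact (Ideal.mul_mono_left (Ideal.pow_le_pow_right (hN ⟨A, hAS, rfl⟩))).trans (hn A)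
end

section
/- Let U = Spec A be an affine scheme over a finite extension L of K, and suppose f_1,...,f_r ∈ A generate the unit ideal, with principal opens U_i = Spec A_{f_i} covering U. Let B = (B_v)_v be an M_K-bounded family of subsets of U. Then setting B^i_v = {x ∈ B_v : |f_i(x)|_v = max_j |f_j(x)|_v}, each (B^i_v)_v is an M_K-bounded family of subsets of U_i, and ∪_{i=1}^r B^i_v = B_v for every v. -/
noncomputable section

open scoped Classical

universe u

/-!
Write `1 = ∑ a_j f_j` in `A`. At a point `x ∈ B^i_v` every `|f_j(x)|_v` is at most
`|f_i(x)|_v`, so `1 ≤ r · max_j |a_j(x)|_v · |f_i(x)|_v`; the bounds on the `a_j` over `B_v`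
then bound `|f_i(x)|_v` below uniformly in `v | v₀`, and `α / f_i^n` is bounded on `B^i_v`.
For all but finitely many `v₀` we also have `|a_j|_v ≤ 1` and `|α|_v ≤ 1` on `B_v`, and `v₀` is
bounded by `1` on `ℕ` (an unbounded absolute value has `|2| > 1`, and only finitely many places of
a proper set have `|2| ≠ 1`), hence non-archimedean; the ultrametric inequality then improves
the lower bound to `|f_i(x)|_v ≥ 1`, which gives the bound `1`.
-/

namespace AbsoluteValue

variable {F : Type*} [Field F] (v : AbsoluteValue F ℝ)

lemma natCast_le_one_of_charP (p : ℕ) [Fact p.Prime] [CharP F p] (m : ℕ) : v m ≤ 1 := by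
  have hfrob : (m : F) ^ p = m := by
    rw [← map_natCast (ZMod.castHom (dvd_refl p) F), ← map_pow, ZMod.pow_card]
  by_contra! hgt
  have := lt_self_pow₀ hgt (Fact.out : p.Prime).one_lt
  rw [← map_pow, hfrob] at this
  exact this.false

lemma one_lt_apply_two_of_not_bounded (hv : ¬ ∀ m : ℕ, v m ≤ 1) : 1 < v 2 := by
  rcases CharP.char_is_prime_or_zero F (ringChar F) with hp | hp
  · have : Fact (ringChar F).Prime := ⟨hp⟩
    exact absurd (v.natCast_le_one_of_charP (ringChar F)) hv
  · have : CharZero F := (CharP.ringChar_zero_iff_CharZero F).mp hp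
    have hcomp (m : ℕ) : v.comp (algebraMap ℚ F).injective m = v m :=
      congrArg v (map_natCast (algebraMap ℚ F) m)
    have := Rat.AbsoluteValue.one_lt_of_not_bounded (f := v.comp (algebraMap ℚ F).injective)
      (by simpa only [hcomp] using hv) (n₀ := 2) one_lt_two
    rwa [hcomp, Nat.cast_ofNat] at this

lemma isNonarchimedean_of_natCast_le_one (h : ∀ m : ℕ, v m ≤ 1) : IsNonarchimedean v := by
  have : IsUltrametricDist (WithAbs v) :=
    IsUltrametricDist.isUltrametricDist_of_forall_norm_natCast_le_one fun m => h m
  intro x y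
  exact IsUltrametricDist.norm_add_le_max ((WithAbs.equiv v).symm x) ((WithAbs.equiv v).symm y)

end AbsoluteValue

section SumMulEqOne

variable {R ι : Type*} [Semiring R] [Nontrivial R] (v : AbsoluteValue R ℝ) {s : Finset ι}
  {c y : ι → R}

lemma AbsoluteValue.ne_zero_of_sum_mul_eq_one (h : ∑ j ∈ s, c j * y j = 1) {i : ι}
    (hy : ∀ j ∈ s, v (y j) ≤ v (y i)) : y i ≠ 0 := by
  intro hi
  have hzero : ∀ j ∈ s, c j * y j = 0 := fun j hj => by
    have hyj : y j = 0 := v.eq_zero.1 <| le_antisymm (by simpa [hi] using hy j hj) (v.nonneg _)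
    rw [hyj, mul_zero]
  rw [Finset.sum_eq_zero hzero] at h
  exact zero_ne_one h

lemma AbsoluteValue.one_le_card_mul_mul_of_sum_mul_eq_one (h : ∑ j ∈ s, c j * y j = 1)
    {C t : ℝ} (hc : ∀ j ∈ s, v (c j) ≤ C) (hy : ∀ j ∈ s, v (y j) ≤ t) :
    1 ≤ s.card * C * t := by
  calc (1 : ℝ) = v (∑ j ∈ s, c j * y j) := by rw [h, v.map_one]
    _ ≤ ∑ j ∈ s, v (c j * y j) := v.sum_le _ _
    _ ≤ ∑ j ∈ s, C * t := Finset.sum_le_sum fun j hj => by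
      rw [v.map_mul]
      exact mul_le_mul (hc j hj) (hy j hj) (v.nonneg _) ((v.nonneg _).trans (hc j hj))
    _ = s.card * C * t := by rw [Finset.sum_const, nsmul_eq_mul, mul_assoc]

lemma IsNonarchimedean.one_le_of_sum_mul_eq_one {v : AbsoluteValue R ℝ} (hv : IsNonarchimedean v)
    (h : ∑ j ∈ s, c j * y j = 1) {t : ℝ} (hc : ∀ j ∈ s, v (c j) ≤ 1)
    (hy : ∀ j ∈ s, v (y j) ≤ t) : 1 ≤ t := by
  have hs : s.Nonempty := Finset.nonempty_of_sum_ne_zero (h ▸ one_ne_zero)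
  obtain ⟨j, hj, hle⟩ := hv.finset_image_add_of_nonempty (fun j => c j * y j) hs
  calc (1 : ℝ) = v (∑ j ∈ s, c j * y j) := by rw [h, v.map_one]
    _ ≤ v (c j) * v (y j) := hle.trans_eq (v.map_mul _ _)
    _ ≤ 1 * t := mul_le_mul (hc j hj) (hy j hj) (v.nonneg _) zero_le_one
    _ = t := one_mul t

end SumMulEqOne

lemma IsProperAbsSet.finite_setOf_not_forall_natCast_le_one {K : Type*} [Field K]
    {M : Set (AbsoluteValue K ℝ)} (hM : IsProperAbsSet M) :
    {v₀ ∈ M | ¬ ∀ m : ℕ, v₀ m ≤ 1}.Finite := by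
  by_cases h2 : (2 : K) = 0
  · refine Set.finite_empty.subset ?_
    rintro v₀ ⟨-, hv₀⟩
    have := v₀.one_lt_apply_two_of_not_bounded hv₀
    rw [h2, map_zero] at this
    exact absurd this (by norm_num)
  · refine (hM.2.2.2 2 h2).subset ?_
    rintro v₀ ⟨hv₀M, hv₀⟩
    exact ⟨hv₀M, (v₀.one_lt_apply_two_of_not_bounded hv₀).ne'⟩

section MaxLocus

variable {K Kbar : Type u} {L A ι : Type*} [Field K] [Field L] [Field Kbar] [Algebra K Kbar]
  [Algebra L Kbar] [CommRing A] [Algebra L A] [Fintype ι]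

def maxLocus (B : AbsoluteValue Kbar ℝ → Set (A →ₐ[L] Kbar)) (f : ι → A) (i : ι)
    (v : AbsoluteValue Kbar ℝ) : Set (A →ₐ[L] Kbar) :=
  {x ∈ B v | ∀ j, v (x (f j)) ≤ v (x (f i))}

variable {B : AbsoluteValue Kbar ℝ → Set (A →ₐ[L] Kbar)} {f a : ι → A}

lemma AlgHom.sum_apply_mul_eq_one (ha : ∑ j, a j * f j = 1) (x : A →ₐ[L] Kbar) :
    ∑ j, x (a j) * x (f j) = 1 := by
  simpa only [map_sum, map_mul, map_one] using congrArg x ha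

lemma apply_ne_zero_of_mem_maxLocus (ha : ∑ j, a j * f j = 1) {i : ι} {v : AbsoluteValue Kbar ℝ}
    {x : A →ₐ[L] Kbar} (hx : x ∈ maxLocus B f i v) : x (f i) ≠ 0 :=
  v.ne_zero_of_sum_mul_eq_one (AlgHom.sum_apply_mul_eq_one ha x) fun j _ => hx.2 j

lemma iUnion_maxLocus (ha : ∑ j, a j * f j = 1) (v : AbsoluteValue Kbar ℝ) :
    ⋃ i, maxLocus B f i v = B v := by
  refine (Set.iUnion_subset fun i => Set.sep_subset _ _).antisymm fun x hx => ?_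
  obtain ⟨j, -, -⟩ := Finset.exists_ne_zero_of_sum_ne_zero
    ((AlgHom.sum_apply_mul_eq_one ha x).trans_ne one_ne_zero)
  have : Nonempty ι := ⟨j⟩
  obtain ⟨i, hi⟩ := Finite.exists_max fun j => v (x (f j))
  exact Set.mem_iUnion.2 ⟨i, hx, hi⟩

lemma exists_bound_on_maxLocus (ha : ∑ j, a j * f j = 1) {v₀ : AbsoluteValue K ℝ}
    (hB : ∀ b : A, ∃ C : ℝ, ∀ v : AbsoluteValue Kbar ℝ, comapAbs v = v₀ → ∀ x ∈ B v, v (x b) ≤ C)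
    (i : ι) (α : A) (n : ℕ) :
    ∃ C : ℝ, ∀ v : AbsoluteValue Kbar ℝ, comapAbs v = v₀ →
      ∀ x ∈ maxLocus B f i v, v (x α) ≤ C * v (x (f i)) ^ n := by
  obtain ⟨Cα, hCα⟩ := hB α
  choose Ca hCa using fun j => hB (a j)
  set C := ∑ j, |Ca j|
  have hCa_le (j : ι) : Ca j ≤ C :=
    (le_abs_self _).trans (Finset.single_le_sum (fun j _ => abs_nonneg (Ca j)) (Finset.mem_univ j))
  refine ⟨max Cα 0 * (Fintype.card ι * C) ^ n, fun v hv x hx => ?_⟩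
  have hfi : 1 ≤ Fintype.card ι * C * v (x (f i)) :=
    v.one_le_card_mul_mul_of_sum_mul_eq_one (AlgHom.sum_apply_mul_eq_one ha x)
      (fun j _ => (hCa j v hv x hx.1).trans (hCa_le j)) fun j _ => hx.2 j
  calc v (x α) ≤ max Cα 0 := (hCα v hv x hx.1).trans (le_max_left _ _)
    _ ≤ max Cα 0 * (Fintype.card ι * C * v (x (f i))) ^ n :=
      le_mul_of_one_le_right (le_max_right _ _) (one_le_pow₀ hfi)
    _ = max Cα 0 * (Fintype.card ι * C) ^ n * v (x (f i)) ^ n := by ring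

lemma le_pow_on_maxLocus (ha : ∑ j, a j * f j = 1) {v₀ : AbsoluteValue K ℝ}
    (hv₀ : ∀ m : ℕ, v₀ m ≤ 1) {b : A}
    (hb : ∀ v : AbsoluteValue Kbar ℝ, comapAbs v = v₀ → ∀ x ∈ B v, v (x b) ≤ 1)
    (haj : ∀ j, ∀ v : AbsoluteValue Kbar ℝ, comapAbs v = v₀ → ∀ x ∈ B v, v (x (a j)) ≤ 1)
    (i : ι) (n : ℕ) :
    ∀ v : AbsoluteValue Kbar ℝ, comapAbs v = v₀ →
      ∀ x ∈ maxLocus B f i v, v (x b) ≤ v (x (f i)) ^ n := by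
  intro v hv x hx
  have hnat (m : ℕ) : v m ≤ 1 :=
    calc v m = comapAbs v (m : K) := (congrArg v (map_natCast (algebraMap K Kbar) m)).symm
      _ = v₀ m := by rw [hv]
      _ ≤ 1 := hv₀ m
  have hfi : 1 ≤ v (x (f i)) :=
    (v.isNonarchimedean_of_natCast_le_one hnat).one_le_of_sum_mul_eq_one
      (AlgHom.sum_apply_mul_eq_one ha x) (fun j _ => haj j v hv x hx.1) fun j _ => hx.2 j
  exact (hb v hv x hx.1).trans (one_le_pow₀ hfi)

lemma finite_setOf_not_le_pow_on_maxLocus (ha : ∑ j, a j * f j = 1)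
    {M : Set (AbsoluteValue K ℝ)} (hM : IsProperAbsSet M)
    (hB : ∀ b : A, {v₀ ∈ M | ¬ ∀ v : AbsoluteValue Kbar ℝ, comapAbs v = v₀ →
      ∀ x ∈ B v, v (x b) ≤ 1}.Finite)
    (i : ι) (α : A) (n : ℕ) :
    {v₀ ∈ M | ¬ ∀ v : AbsoluteValue Kbar ℝ, comapAbs v = v₀ →
      ∀ x ∈ maxLocus B f i v, v (x α) ≤ v (x (f i)) ^ n}.Finite := by
  refine (((hB α).union hM.finite_setOf_not_forall_natCast_le_one).union
    (Set.finite_iUnion fun j => hB (a j))).subset ?_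
  rintro v₀ ⟨hv₀M, hbad⟩
  by_contra hgood
  simp only [Set.mem_union, Set.mem_iUnion, Set.mem_ofPred_eq, not_or, not_exists, not_and,
    not_not] at hgood
  exact hbad (le_pow_on_maxLocus ha (hgood.1.2 hv₀M) (hgood.1.1 hv₀M)
    (fun j => hgood.2 j hv₀M) i n)

end MaxLocus

theorem stmt_18_general {K : Type u} [Field K] {L : Type u} [Field L]
    {Kbar : Type u} [Field Kbar] [Algebra K Kbar] [Algebra L Kbar]
    (M : Set (AbsoluteValue K ℝ)) (hM : IsProperAbsSet M)
    (A : Type u) [CommRing A] [Algebra L A]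
    (r : ℕ) (f : Fin r → A) (hgen : Ideal.span (Set.range f) = ⊤)
    (B : AbsoluteValue Kbar ℝ → Set (A →ₐ[L] Kbar))
    (hBbdd : ∀ a : A, ∀ v₀ ∈ M, ∃ C : ℝ,
      ∀ v : AbsoluteValue Kbar ℝ, comapAbs v = v₀ → ∀ x ∈ B v, v (x a) ≤ C)
    (hBone : ∀ a : A,
      {v₀ ∈ M | ¬ ∀ v : AbsoluteValue Kbar ℝ, comapAbs v = v₀ →
        ∀ x ∈ B v, v (x a) ≤ 1}.Finite) :
    -- with `B^i_v := {x ∈ B_v | |f_i(x)|_v = max_j |f_j(x)|_v}` we have: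
    (∀ (i : Fin r) (v : AbsoluteValue Kbar ℝ),
      ∀ x ∈ {x ∈ B v | ∀ j, v (x (f j)) ≤ v (x (f i))}, x (f i) ≠ 0) ∧
    (∀ (i : Fin r) (α : A) (n : ℕ),
      (∀ v₀ ∈ M, ∃ C : ℝ, ∀ v : AbsoluteValue Kbar ℝ, comapAbs v = v₀ →
        ∀ x ∈ {x ∈ B v | ∀ j, v (x (f j)) ≤ v (x (f i))},
          v (x α) ≤ C * v (x (f i)) ^ n) ∧
      {v₀ ∈ M | ¬ ∀ v : AbsoluteValue Kbar ℝ, comapAbs v = v₀ →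
        ∀ x ∈ {x ∈ B v | ∀ j, v (x (f j)) ≤ v (x (f i))},
          v (x α) ≤ v (x (f i)) ^ n}.Finite) ∧
    (∀ v : AbsoluteValue Kbar ℝ,
      (⋃ i : Fin r, {x ∈ B v | ∀ j, v (x (f j)) ≤ v (x (f i))}) = B v) := by
  obtain ⟨a, ha⟩ := Ideal.mem_span_range_iff_exists_fun.mp (hgen ▸ Submodule.mem_top (x := 1))
  exact ⟨fun i v x hx => apply_ne_zero_of_mem_maxLocus ha hx,
    fun i α n => ⟨fun v₀ hv₀ => exists_bound_on_maxLocus ha (fun b => hBbdd b v₀ hv₀) i α n,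
      finite_setOf_not_le_pow_on_maxLocus ha hM hBone i α n⟩,
    iUnion_maxLocus ha⟩

/-- let `U = Spec A` be affine over a finite extension `L` of `K` (all inside a
fixed algebraic closure `K̄` of `K`), and let `f_1, …, f_r ∈ A` generate the unit ideal, so the
principal opens `U_i = Spec A_{f_i}` cover `U`. If `B = (B_v)_v` is an `M_K`-bounded family of
subsets of `U(K̄)` (identified with the `L`-algebra homomorphisms `A → K̄`), then the sets
`B^i_v = {x ∈ B_v : |f_i(x)|_v = max_j |f_j(x)|_v}` form `M_K`-bounded families of subsets of
the `U_i` (every regular function `α / f_i^n` on `U_i` is bounded on them, with constants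
uniform over `v | v₀` and `≤ 1` for all but finitely many `v₀ ∈ M_K`), and
`∪_{i} B^i_v = B_v` for every `v`. -/
theorem stmt_18 {K : Type u} [Field K] {L : Type u} [Field L] [Algebra K L]
    [FiniteDimensional K L]
    {Kbar : Type u} [Field Kbar] [Algebra K Kbar] [IsAlgClosure K Kbar]
    [Algebra L Kbar] [IsScalarTower K L Kbar]
    (M : Set (AbsoluteValue K ℝ)) (hM : IsProperAbsSet M)
    (A : Type u) [CommRing A] [Algebra L A]
    (r : ℕ) (f : Fin r → A) (hgen : Ideal.span (Set.range f) = ⊤)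
    (B : AbsoluteValue Kbar ℝ → Set (A →ₐ[L] Kbar))
    (hBbdd : ∀ a : A, ∀ v₀ ∈ M, ∃ C : ℝ,
      ∀ v : AbsoluteValue Kbar ℝ, comapAbs v = v₀ → ∀ x ∈ B v, v (x a) ≤ C)
    (hBone : ∀ a : A,
      {v₀ ∈ M | ¬ ∀ v : AbsoluteValue Kbar ℝ, comapAbs v = v₀ →
        ∀ x ∈ B v, v (x a) ≤ 1}.Finite) :
    -- with `B^i_v := {x ∈ B_v | |f_i(x)|_v = max_j |f_j(x)|_v}` we have:
    (∀ (i : Fin r) (v : AbsoluteValue Kbar ℝ),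
      ∀ x ∈ {x ∈ B v | ∀ j, v (x (f j)) ≤ v (x (f i))}, x (f i) ≠ 0) ∧
    (∀ (i : Fin r) (α : A) (n : ℕ),
      (∀ v₀ ∈ M, ∃ C : ℝ, ∀ v : AbsoluteValue Kbar ℝ, comapAbs v = v₀ →
        ∀ x ∈ {x ∈ B v | ∀ j, v (x (f j)) ≤ v (x (f i))},
          v (x α) ≤ C * v (x (f i)) ^ n) ∧
      {v₀ ∈ M | ¬ ∀ v : AbsoluteValue Kbar ℝ, comapAbs v = v₀ →
        ∀ x ∈ {x ∈ B v | ∀ j, v (x (f j)) ≤ v (x (f i))},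
          v (x α) ≤ v (x (f i)) ^ n}.Finite) ∧
    (∀ v : AbsoluteValue Kbar ℝ,
      (⋃ i : Fin r, {x ∈ B v | ∀ j, v (x (f j)) ≤ v (x (f i))}) = B v) :=
  stmt_18_general M hM A r f hgen B hBbdd hBone
end
end
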